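/- arXiv:0711.4160 — 2 statements merged into one kernel-verified Lean document; each statement's English description precedes it below -/
import Mathlib

section
/- The Dyson product satisfies the recurrence D_n(x, a) = ∑_{k=1}^n D_n(x, a - e_k), where e_k is the k-th unit vector, provided all a_i ≥ 1. -/
open Finset

noncomputable def Xm {n : ℕ} (v : Fin n → ℤ) : AddMonoidAlgebra ℚ (Fin n → ℤ) :=
  AddMonoidAlgebra.single v 1

noncomputable def dyson {n : ℕ} (a : Fin n → ℕ) : AddMonoidAlgebra ℚ (Fin n → ℤ) :=
  ∏ i : Fin n, ∏ j ∈ Finset.univ.filter (fun j => j ≠ i),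
    (1 - Xm (Pi.single i 1 - Pi.single j 1)) ^ a i

/-- constant term (coefficient of x₁⁰⋯xₙ⁰) of a Laurent polynomial -/
noncomputable def ct {n : ℕ} (f : AddMonoidAlgebra ℚ (Fin n → ℤ)) : ℚ := f.coeff 0

/-!
Since `D_n(x, a) = D_n(x, a - e_k) · ∏_{j ≠ k} (1 - x_k/x_j)`, dividing the recurrence by
`D_n(x, a)` in the field of fractions leaves `∑_k ∏_{j ≠ k} (1 - x_k/x_j)⁻¹ = 1`. The `k`-th
summand is the value at `0` of the `k`-th Lagrange basis polynomial for the distinct nodes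
`x_1, …, x_n`, and these basis polynomials sum to `1`.
-/

theorem Lagrange.sum_inv_prod_one_sub_div_eq_one {K ι : Type*} [Field K] [DecidableEq ι]
    {s : Finset ι} (hs : s.Nonempty) {t : ι → K} (ht : Set.InjOn t s) (ht0 : ∀ i ∈ s, t i ≠ 0) :
    ∑ k ∈ s, (∏ j ∈ s.erase k, (1 - t k / t j))⁻¹ = 1 := by
  have hbasis : ∀ k,
      (∏ j ∈ s.erase k, (1 - t k / t j))⁻¹ = (Lagrange.basis s t k).eval 0 := by
    intro k
    rw [Lagrange.basis, Polynomial.eval_prod, ← prod_inv_distrib]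
    refine prod_congr rfl fun j hj => ?_
    have hj : j ∈ s := mem_of_mem_erase hj
    simp only [Lagrange.basisDivisor, Polynomial.eval_mul, Polynomial.eval_C,
      Polynomial.eval_sub, Polynomial.eval_X]
    rw [one_sub_div (ht0 j hj), inv_div, zero_sub, mul_neg, ← neg_mul, ← inv_neg, neg_sub,
      div_eq_inv_mul]
  rw [sum_congr rfl fun k _ => hbasis k, ← Polynomial.eval_finsetSum, Lagrange.sum_basis ht hs,
    Polynomial.eval_one]

theorem Lagrange.eq_sum_of_forall_eq_mul_prod_one_sub_div {K ι : Type*} [Field K] [DecidableEq ι]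
    {s : Finset ι} (hs : s.Nonempty) {t : ι → K} (ht : Set.InjOn t s) (ht0 : ∀ i ∈ s, t i ≠ 0)
    {c : ι → K} {d : K} (hc : ∀ k ∈ s, d = c k * ∏ j ∈ s.erase k, (1 - t k / t j)) :
    d = ∑ k ∈ s, c k := by
  have hprod : ∀ k ∈ s, ∏ j ∈ s.erase k, (1 - t k / t j) ≠ 0 := by
    intro k hk
    refine prod_ne_zero_iff.mpr fun j hj => ?_
    obtain ⟨hjk, hj⟩ := mem_erase.mp hj
    rw [sub_ne_zero, ne_comm, Ne, div_eq_one_iff_eq (ht0 j hj)]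
    exact fun h => hjk (ht hj hk h.symm)
  calc d = ∑ k ∈ s, d * (∏ j ∈ s.erase k, (1 - t k / t j))⁻¹ := by
        rw [← mul_sum, Lagrange.sum_inv_prod_one_sub_div_eq_one hs ht ht0, mul_one]
    _ = ∑ k ∈ s, c k := sum_congr rfl fun k hk => by
        rw [hc k hk, mul_inv_cancel_right₀ (hprod k hk)]

section Dyson

variable {n : ℕ}

theorem Xm_add (u v : Fin n → ℤ) : Xm (u + v) = Xm u * Xm v := by
  simp [Xm, AddMonoidAlgebra.single_mul_single]

theorem Xm_injective : Function.Injective (Xm (n := n)) :=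
  AddMonoidAlgebra.single_left_injective one_ne_zero

theorem isUnit_Xm (v : Fin n → ℤ) : IsUnit (Xm v) :=
  IsUnit.of_mul_eq_one (Xm (-v)) (by rw [← Xm_add, add_neg_cancel]; rfl)

theorem map_Xm_sub {K : Type*} [DivisionRing K] (φ : AddMonoidAlgebra ℚ (Fin n → ℤ) →+* K)
    (u v : Fin n → ℤ) : φ (Xm (u - v)) = φ (Xm u) / φ (Xm v) := by
  rw [eq_div_iff ((isUnit_Xm v).map φ).ne_zero, ← map_mul, ← Xm_add, sub_add_cancel]

noncomputable def dysonFactor (k : Fin n) : AddMonoidAlgebra ℚ (Fin n → ℤ) :=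
  ∏ j ∈ univ.erase k, (1 - Xm (Pi.single k 1 - Pi.single j 1))

theorem dyson_eq_prod_pow (a : Fin n → ℕ) : dyson a = ∏ i, dysonFactor i ^ a i := by
  simp only [dyson, dysonFactor, filter_ne', prod_pow]

theorem dyson_eq_dyson_update_mul (a : Fin n → ℕ) {k : Fin n} (hk : 1 ≤ a k) :
    dyson a = dyson (Function.update a k (a k - 1)) * dysonFactor k := by
  have hrest : ∀ i ∈ univ.erase k,
      dysonFactor i ^ Function.update a k (a k - 1) i = dysonFactor i ^ a i := fun i hi => by
    rw [Function.update_of_ne (ne_of_mem_erase hi)]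
  rw [dyson_eq_prod_pow, dyson_eq_prod_pow, ← mul_prod_erase univ _ (mem_univ k),
    ← mul_prod_erase univ _ (mem_univ k), Function.update_self, prod_congr rfl hrest,
    mul_right_comm, ← pow_succ, Nat.sub_add_cancel hk]

theorem map_dysonFactor {K : Type*} [Field K] (φ : AddMonoidAlgebra ℚ (Fin n → ℤ) →+* K)
    (k : Fin n) :
    φ (dysonFactor k) = ∏ j ∈ univ.erase k,
      (1 - φ (Xm (Pi.single k 1)) / φ (Xm (Pi.single j 1))) := by
  simp only [dysonFactor, map_prod, map_sub, map_one, map_Xm_sub]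

end Dyson

theorem dyson_recurrence {n : ℕ} (hn : 1 ≤ n) (a : Fin n → ℕ) (ha : ∀ i, 1 ≤ a i) :
    dyson a = ∑ k : Fin n, dyson (Function.update a k (a k - 1)) := by
  let K := FractionRing (AddMonoidAlgebra ℚ (Fin n → ℤ))
  let φ := algebraMap (AddMonoidAlgebra ℚ (Fin n → ℤ)) K
  have hφ : Function.Injective φ := IsFractionRing.injective _ K
  let t : Fin n → K := fun i => φ (Xm (Pi.single i 1))
  have ht : Function.Injective t := fun i j h => by
    simpa [Pi.single_apply] using congrFun (Xm_injective (hφ h)) i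
  have ht0 : ∀ i ∈ univ, t i ≠ 0 := fun i _ => ((isUnit_Xm _).map φ).ne_zero
  apply hφ
  rw [map_sum]
  refine Lagrange.eq_sum_of_forall_eq_mul_prod_one_sub_div
    (univ_nonempty_iff.mpr ⟨⟨0, hn⟩⟩) ht.injOn ht0 fun k _ => ?_
  rw [← map_dysonFactor, ← map_mul, ← dyson_eq_dyson_update_mul a (ha k)]
end

section
/- If a_r = 0 and r ≠ s, then the constant term of (x_s^2/x_r^2)·D_n(x,a) is 0. -/
open Finset

/-!
Since `a r = 0`, every factor of `D_n` that actually occurs is `1 - x_i/x_j` with `i ≠ r`, whose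
monomials have nonpositive degree in `x_r`. Laurent polynomials supported on a submonoid of
exponents form a subring, so every monomial of `D_n` has nonpositive `x_r`-degree, and after
multiplying by `x_s²/x_r²` none of them can reach the constant monomial.
-/

namespace AddMonoidAlgebra

variable (R : Type*) {A : Type*} [Ring R] [AddMonoid A]

def supportedSubring (S : AddSubmonoid A) : Subring R[A] where
  carrier := {f | ↑f.coeff.support ⊆ (S : Set A)}
  zero_mem' := by simp
  one_mem' := by
    intro m hm
    rw [Finset.mem_coe, one_def, coeff_single, Finsupp.mem_support_single] at hm
    exact hm.1 ▸ S.zero_mem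
  add_mem' {f g} hf hg m hm := by
    classical
    rcases Finset.mem_union.1 (Finsupp.support_add hm) with h | h
    exacts [hf h, hg h]
  neg_mem' {f} hf m hm := hf (by simpa using hm)
  mul_mem' {f g} hf hg m hm := by
    classical
    obtain ⟨x, hx, y, hy, rfl⟩ := Finset.mem_add.1 (support_coeff_mul_subset f g hm)
    exact S.add_mem (hf hx) (hg hy)

variable {R} {S : AddSubmonoid A}

theorem single_mem_supportedSubring {m : A} (hm : m ∈ S) (c : R) :
    single m c ∈ supportedSubring R S := by
  intro x hx
  rw [Finset.mem_coe, coeff_single] at hx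
  exact (Finset.mem_singleton.1 (Finsupp.support_single_subset hx)) ▸ hm

theorem coeff_eq_zero_of_mem_supportedSubring {f : R[A]} (hf : f ∈ supportedSubring R S)
    {m : A} (hm : m ∉ S) : f.coeff m = 0 :=
  Finsupp.notMem_support_iff.1 fun h => hm (hf h)

end AddMonoidAlgebra

open AddMonoidAlgebra

def nonposAt {n : ℕ} (r : Fin n) : AddSubmonoid (Fin n → ℤ) where
  carrier := {v | v r ≤ 0}
  zero_mem' := le_refl (0 : ℤ)
  add_mem' {v w} hv hw := show v r + w r ≤ 0 from add_nonpos hv hw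

@[simp]
theorem mem_nonposAt {n : ℕ} {r : Fin n} {v : Fin n → ℤ} : v ∈ nonposAt r ↔ v r ≤ 0 := by
  rfl

theorem dyson_mem_supportedSubring_nonposAt {n : ℕ} {a : Fin n → ℕ} {r : Fin n} (har : a r = 0) :
    dyson a ∈ supportedSubring ℚ (nonposAt r) := by
  refine Subring.prod_mem _ fun i _ => Subring.prod_mem _ fun j _ => ?_
  rcases eq_or_ne i r with rfl | hir
  · rw [har, pow_zero]
    exact Subring.one_mem _
  refine Subring.pow_mem _ (Subring.sub_mem _ (Subring.one_mem _) ?_) _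
  refine single_mem_supportedSubring ?_ _
  rw [mem_nonposAt, Pi.sub_apply, Pi.single_eq_of_ne hir.symm, zero_sub, neg_nonpos]
  exact (Pi.single_nonneg (α := fun _ => ℤ)).2 zero_le_one r

theorem ct_zero_of_ar_eq_zero {n : ℕ} (a : Fin n → ℕ) (r s : Fin n) (hrs : r ≠ s)
    (har : a r = 0) :
    ct (Xm (2 • Pi.single s 1 - 2 • Pi.single r 1) * dyson a) = 0 := by
  rw [ct, Xm, coeff_single_mul_apply, one_mul]
  refine coeff_eq_zero_of_mem_supportedSubring (dyson_mem_supportedSubring_nonposAt har) ?_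
  simp [hrs]
end
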